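/- Let K be a nonarchimedean field and let A be a Banach algebra over K whose underlying ring is Noetherian. Then A is a Jacobson ring, i.e. every prime ideal of A is an intersection of maximal ideals. -/

import Mathlib

/-!
Every ideal `I` of a Noetherian Banach algebra is closed: if `w₁, …, wₙ` generate the closure
of `I`, the open mapping theorem writes `wᵢ - zᵢ = ∑ⱼ aᵢⱼ wⱼ` with `zᵢ ∈ I` close to `wᵢ` and
`a` a small matrix, so `1 - a` is invertible and every `wᵢ` lies in the ideal spanned by the `zᵢ`.

For a prime `p` the quotient `B = A ⧸ p` is therefore a Noetherian Banach domain, and it suffices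
to show that its Jacobson radical vanishes. If `f ≠ 0` lies in it, multiplication by `f` is
injective with closed range `(f)`, hence `‖v‖ ≤ C ‖f v‖`. For a scalar `s` of small norm,
`v = (1 - s⁻¹ f)⁻¹` satisfies `f v = s (v - 1)`, which forces `‖v‖ < 1`; but then
`f v = -s (1 - v)` is a unit, which is impossible for `f` in the Jacobson radical.
-/

open scoped NNReal Matrix.Norms.Operator
open Matrix

theorem Matrix.linfty_opNorm_le_card_mul {m n α : Type*} [Fintype m] [Fintype n]
    [SeminormedAddCommGroup α] (a : Matrix m n α) {r : ℝ} (hr : 0 ≤ r)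
    (h : ∀ i j, ‖a i j‖ ≤ r) : ‖a‖ ≤ Fintype.card n * r := by
  lift r to ℝ≥0 using hr
  rw [linfty_opNorm_def]
  norm_cast
  refine Finset.sup_le fun i _ => (Finset.sum_le_card_nsmul _ _ r fun j _ => ?_).trans ?_
  · exact_mod_cast h i j
  · simp

section BanachAlgebra

variable {A : Type*} [NormedCommRing A] [CompleteSpace A]

namespace Ideal

theorem span_range_le_span_range_of_sub_eq_mulVec {ι : Type*} [Fintype ι] [DecidableEq ι]
    {w z : ι → A} {a : Matrix ι ι A} (ha : ‖a‖ < 1) (h : w - z = a *ᵥ w) :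
    span (Set.range w) ≤ span (Set.range z) := by
  -- the ℓ∞-operator norm induces the product uniformity, in which matrices are complete
  have : @CompleteSpace (Matrix ι ι A) PseudoMetricSpace.toUniformSpace :=
    inferInstanceAs (CompleteSpace (ι → ι → A))
  have hz : (Units.oneSub a ha : Matrix ι ι A) *ᵥ w = z := by
    rw [Units.val_oneSub, sub_mulVec, one_mulVec, ← h, sub_sub_cancel]
  have hw : w = (↑(Units.oneSub a ha)⁻¹ : Matrix ι ι A) *ᵥ z := by
    rw [← hz, mulVec_mulVec, Units.inv_mul, one_mulVec]
  rw [span_le]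
  rintro _ ⟨i, rfl⟩
  rw [hw, mulVec, dotProduct]
  exact sum_mem _ fun j _ => mul_mem_left _ _ (subset_span (Set.mem_range_self j))

theorem exists_norm_coeffs_le_of_isClosed_span_range (K : Type*) [NontriviallyNormedField K]
    [NormedAlgebra K A] {ι : Type*} [Fintype ι] (w : ι → A)
    (hw : IsClosed (span (Set.range w) : Set A)) :
    ∃ C > 0, ∀ y ∈ span (Set.range w), ∃ b : ι → A, ∑ i, b i * w i = y ∧ ‖b‖ ≤ C * ‖y‖ := by
  set N := (span (Set.range w)).restrictScalars K
  have : CompleteSpace N := hw.completeSpace_coe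
  let Φ : (ι → A) →L[K] N :=
    (∑ i, (ContinuousLinearMap.proj i).smulRight (w i)).codRestrict N fun b => by
      simpa [N] using
        sum_mem _ fun i _ => mul_mem_left (span (Set.range w)) (b i) (subset_span ⟨i, rfl⟩)
  have hΦ : Function.Surjective Φ := by
    rintro ⟨y, hy⟩
    obtain ⟨b, hb⟩ := (Submodule.mem_span_range_iff_exists_fun A).1 hy
    exact ⟨b, Subtype.ext (by simpa [Φ] using hb)⟩
  obtain ⟨C, hC0, hC⟩ := Φ.exists_preimage_norm_le hΦ
  refine ⟨C, hC0, fun y hy => ?_⟩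
  obtain ⟨b, hb, hbC⟩ := hC ⟨y, hy⟩
  exact ⟨b, by simpa [Φ] using congrArg Subtype.val hb, hbC⟩

theorem isClosed_of_isNoetherianRing (K : Type*) [NontriviallyNormedField K] [NormedAlgebra K A]
    [IsNoetherianRing A] (I : Ideal A) : IsClosed (I : Set A) := by
  obtain ⟨n, w, hw⟩ :=
    Submodule.fg_iff_exists_fin_generating_family.1 (IsNoetherian.noetherian I.closure)
  have hspan : (span (Set.range w) : Set A) = closure I := by rw [← coe_closure, ← hw]
  obtain ⟨C, hC0, hC⟩ :=
    exists_norm_coeffs_le_of_isClosed_span_range K w (hspan ▸ isClosed_closure)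
  set ε : ℝ := 1 / (2 * (n * C + 1))
  have hε : 0 < ε := by positivity
  have hzex : ∀ i, ∃ z ∈ I, ‖w i - z‖ < ε := fun i => by
    have : w i ∈ closure (I : Set A) := hspan ▸ subset_span ⟨i, rfl⟩
    simpa [dist_eq_norm] using Metric.mem_closure_iff.1 this ε hε
  choose z hzI hz using hzex
  have haex : ∀ i, ∃ b : Fin n → A, ∑ j, b j * w j = w i - z i ∧ ‖b‖ ≤ C * ‖w i - z i‖ :=
    fun i => hC _ <| sub_mem (subset_span ⟨i, rfl⟩) <| by
      rw [← SetLike.mem_coe, hspan]; exact subset_closure (hzI i)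
  choose a ha haC using haex
  have hsub : w - z = Matrix.of a *ᵥ w := funext fun i => (ha i).symm
  have hnorm : ‖Matrix.of a‖ < 1 := by
    have hentry : ∀ i j, ‖Matrix.of a i j‖ ≤ C * ε := fun i j =>
      (norm_le_pi_norm (a i) j).trans <| (haC i).trans <| by gcongr; exact (hz i).le
    refine (linfty_opNorm_le_card_mul _ (by positivity) hentry).trans_lt ?_
    have : (0 : ℝ) ≤ n * C := by positivity
    rw [Fintype.card_fin, ← mul_assoc, mul_one_div, div_lt_one (by positivity)]
    linarith
  refine closure_subset_iff_isClosed.1 ?_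
  rw [← hspan]
  exact (span_range_le_span_range_of_sub_eq_mulVec hnorm hsub).trans
    (span_le.2 (Set.range_subset_iff.2 hzI))

end Ideal

theorem exists_antilipschitzWith_mul_of_isNoetherianRing (K : Type*) [NontriviallyNormedField K]
    [NormedAlgebra K A] [IsNoetherianRing A] {f : A} (hf : IsLeftRegular f) :
    ∃ C, AntilipschitzWith C (f * ·) := by
  refine (ContinuousLinearMap.mul K A f).antilipschitz_of_injective_of_isClosed_range hf ?_
  have hrange : Set.range (ContinuousLinearMap.mul K A f) = (Ideal.span {f} : Set A) := by
    ext x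
    simp [Ideal.mem_span_singleton', mul_comm]
  rw [hrange]
  exact Ideal.isClosed_of_isNoetherianRing K _

namespace Ideal

theorem not_antilipschitzWith_mul_of_mem_jacobson_bot (K : Type*) [NontriviallyNormedField K]
    [NormedAlgebra K A] [Nontrivial A] {f : A} (hf : f ∈ jacobson (⊥ : Ideal A)) (C : ℝ≥0) :
    ¬AntilipschitzWith C (f * ·) := by
  intro hC
  have hbound : ∀ u, ‖u‖ ≤ C * ‖f * u‖ := fun u => by simpa using hC.le_mul_dist u 0
  obtain ⟨s, hs0, hs⟩ := NormedField.exists_norm_lt K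
    (show (0 : ℝ) < 1 / (2 * C * (‖(1 : A)‖ + 1) + 1) by positivity)
  have hs0' : s ≠ 0 := norm_pos_iff.1 hs0
  obtain ⟨v, hv⟩ := (mem_jacobson_bot.1 hf (algebraMap K A (-s⁻¹))).exists_right_inv
  have hfv : f * v = algebraMap K A s * (v - 1) := by
    have : algebraMap K A s * algebraMap K A s⁻¹ = 1 := by
      rw [← map_mul, mul_inv_cancel₀ hs0', map_one]
    rw [map_neg] at hv
    linear_combination (-(algebraMap K A s)) * hv - (f * v) * this
  have hv_lt : ‖v‖ < 1 := by
    have hle : ‖v‖ ≤ C * ‖s‖ * (‖v‖ + ‖(1 : A)‖) := calc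
      ‖v‖ ≤ C * ‖f * v‖ := hbound v
      _ = C * (‖s‖ * ‖v - 1‖) := by rw [hfv, ← Algebra.smul_def, norm_smul]
      _ ≤ C * (‖s‖ * (‖v‖ + ‖(1 : A)‖)) := by gcongr; exact norm_sub_le _ _
      _ = C * ‖s‖ * (‖v‖ + ‖(1 : A)‖) := by ring
    rw [lt_div_iff₀ (by positivity)] at hs
    have : (0 : ℝ) ≤ C * ‖s‖ := by positivity
    nlinarith [norm_nonneg v, norm_nonneg (1 : A)]
  have hunit : IsUnit (f * v) := by
    rw [hfv, ← neg_sub, mul_neg]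
    exact (((isUnit_iff_ne_zero.2 hs0').map (algebraMap K A)).mul
      (Units.oneSub v hv_lt).isUnit).neg
  exact (jacobson_eq_top_iff.not.2 bot_ne_top)
    (eq_top_of_isUnit_mem _ hf (isUnit_of_mul_isUnit_left hunit))

theorem jacobson_bot_eq_bot_of_isNoetherianRing (K : Type*) [NontriviallyNormedField K]
    [NormedAlgebra K A] [IsDomain A] [IsNoetherianRing A] : jacobson (⊥ : Ideal A) = ⊥ := by
  refine eq_bot_iff.2 fun f hf => ?_
  by_contra hf0
  obtain ⟨C, hC⟩ := exists_antilipschitzWith_mul_of_isNoetherianRing K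
    (IsLeftCancelMulZero.mul_left_cancel_of_ne_zero hf0)
  exact not_antilipschitzWith_mul_of_mem_jacobson_bot K hf C hC

end Ideal

theorem isJacobsonRing_of_isNoetherianRing (K : Type*) [NontriviallyNormedField K]
    [NormedAlgebra K A] [IsNoetherianRing A] : IsJacobsonRing A := by
  refine isJacobsonRing_iff_prime_eq.2 fun p hp => ?_
  have : IsClosed (p : Set A) := Ideal.isClosed_of_isNoetherianRing K p
  exact Ideal.jacobson_eq_iff_jacobson_quotient_eq_bot.2
    (Ideal.jacobson_bot_eq_bot_of_isNoetherianRing K)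

end BanachAlgebra

theorem noetherian_banach_algebra_is_jacobson
    {K A : Type*} [NontriviallyNormedField K]
    [NormedCommRing A] [NormedAlgebra K A] [CompleteSpace A]
    [IsNoetherianRing A] :
    ∀ p : Ideal A, p.IsPrime → p = sInf {m : Ideal A | p ≤ m ∧ m.IsMaximal} :=
  fun _ hp => ((isJacobsonRing_of_isNoetherianRing K).out hp.isRadical).symm
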